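/- Let Φ : [0,∞) → ℝ be an increasing continuous function with Φ(0)=0 such that t ↦ Φ(√t) is convex on [0,∞). Extend Φ to ℝ by Φ(t)=Φ(|t|). Then for all real a, b: (Φ(a) + Φ(b))/2 ≥ Φ(|a+b|/2) + Φ(|a−b|/2). -/

import Mathlib

/-!
Write `ψ t = Φ (√t)`, convex on `[0, ∞)` with `ψ 0 = 0`, hence superadditive there. By the parallelogram
identity `((a+b)/2)² + ((a-b)/2)² = (a² + b²)/2`, superadditivity gives
`Φ (|a+b|/2) + Φ (|a-b|/2) ≤ ψ ((a² + b²)/2)`, and midpoint convexity of `ψ` at `a²`, `b²`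
bounds the right side by `(Φ |a| + Φ |b|)/2`.
-/

open Set

theorem ConvexOn.map_smul_le_smul {E : Type*} [AddCommGroup E] [Module ℝ E] {s : Set E}
    {f : E → ℝ} (hf : ConvexOn ℝ s f) (h0 : (0 : E) ∈ s) (hf0 : f 0 ≤ 0) {x : E} (hx : x ∈ s)
    {t : ℝ} (ht0 : 0 ≤ t) (ht1 : t ≤ 1) : f (t • x) ≤ t * f x := by
  have h := hf.2 hx h0 ht0 (sub_nonneg.2 ht1) (add_sub_cancel t 1)
  simp only [smul_zero, add_zero, smul_eq_mul] at h
  nlinarith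

theorem ConvexOn.add_le_map_add {f : ℝ → ℝ} (hf : ConvexOn ℝ (Ici 0) f) (hf0 : f 0 ≤ 0)
    {u v : ℝ} (hu : 0 ≤ u) (hv : 0 ≤ v) : f u + f v ≤ f (u + v) := by
  rcases (add_nonneg hu hv).eq_or_lt with huv | huv
  · obtain ⟨rfl, rfl⟩ : u = 0 ∧ v = 0 := ⟨by linarith, by linarith⟩
    simpa using hf0
  have hscale : ∀ w, 0 ≤ w → w ≤ u + v → f w ≤ w / (u + v) * f (u + v) := fun w hw hwuv => by
    have h := hf.map_smul_le_smul self_mem_Ici hf0 (mem_Ici.2 huv.le)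
      (div_nonneg hw huv.le) ((div_le_one huv).2 hwuv)
    rwa [smul_eq_mul, div_mul_cancel₀ w huv.ne'] at h
  have hsum : u / (u + v) * f (u + v) + v / (u + v) * f (u + v) = f (u + v) := by
    rw [← add_mul, ← add_div, div_self huv.ne', one_mul]
  linarith [hscale u hu (by linarith), hscale v hv (by linarith)]

theorem stmt_8_general (Φ : ℝ → ℝ)
    (hΦ0 : Φ 0 = 0)
    (hconv : ConvexOn ℝ (Set.Ici 0) (fun t => Φ (Real.sqrt t))) :
    ∀ a b : ℝ, (Φ |a| + Φ |b|) / 2 ≥ Φ (|a + b| / 2) + Φ (|a - b| / 2) := by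
  intro a b
  have hΦ_abs : ∀ x : ℝ, Φ |x| = Φ (Real.sqrt (x ^ 2)) := fun x => by rw [Real.sqrt_sq_eq_abs]
  have hsuper : Φ (|a + b| / 2) + Φ (|a - b| / 2) ≤ Φ (Real.sqrt ((a ^ 2 + b ^ 2) / 2)) := by
    have h := hconv.add_le_map_add (by simp [hΦ0]) (sq_nonneg ((a + b) / 2))
      (sq_nonneg ((a - b) / 2))
    rw [show ((a + b) / 2) ^ 2 + ((a - b) / 2) ^ 2 = (a ^ 2 + b ^ 2) / 2 by ring] at h
    simpa only [← hΦ_abs, abs_div, abs_two] using h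
  have hmid : Φ (Real.sqrt ((a ^ 2 + b ^ 2) / 2)) ≤ (Φ |a| + Φ |b|) / 2 := by
    have h := hconv.2 (mem_Ici.2 (sq_nonneg a)) (mem_Ici.2 (sq_nonneg b))
      (by norm_num : (0 : ℝ) ≤ 1 / 2) (by norm_num : (0 : ℝ) ≤ 1 / 2) (by norm_num)
    simp only [smul_eq_mul] at h
    rw [hΦ_abs, hΦ_abs, show (a ^ 2 + b ^ 2) / 2 = 1 / 2 * a ^ 2 + 1 / 2 * b ^ 2 by ring]
    linarith
  exact hsuper.trans hmid

theorem stmt_8 (Φ : ℝ → ℝ)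
    (hmono : MonotoneOn Φ (Set.Ici 0)) (hcont : ContinuousOn Φ (Set.Ici 0))
    (hΦ0 : Φ 0 = 0)
    (hconv : ConvexOn ℝ (Set.Ici 0) (fun t => Φ (Real.sqrt t))) :
    ∀ a b : ℝ, (Φ |a| + Φ |b|) / 2 ≥ Φ (|a + b| / 2) + Φ (|a - b| / 2) :=
  stmt_8_general Φ hΦ0 hconv
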